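/- Let G be a graph on a finite vertex set and perform a single random test in which each node is included independently with probability 1/√2; the test is positive if some edge of G is covered. Then: (i) if G has no edges, the probability of a positive test is 0; (ii) if G has exactly one edge, the probability of a positive test is exactly 1/2; (iii) if G has at least two edges, the probability of a positive test is at least 1 − √2/4 (> 0.646), this minimum being attained in the limit by two edges sharing a node (probability 1 − √2/4), while two vertex-disjoint edges give probability 3/4. -/
import Mathlib


open scoped BigOperators Classical
open Finset Filter

noncomputable section

/-- The set of all potential edges: unordered pairs of distinct nodes of `Fin n`. -/
def allPairs (n : ℕ) : Finset (Sym2 (Fin n)) :=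
  Finset.univ.filter fun e => ¬ e.IsDiag

/-- Both endpoints of the pair `e` lie in the test `L`. -/
def pairIn {n : ℕ} (e : Sym2 (Fin n)) (L : Finset (Fin n)) : Prop :=
  ∀ v ∈ e, v ∈ L

/-- The test `L` covers some edge of the edge set `E` (positive outcome `Y = 1`). -/
def covers {n : ℕ} (E : Finset (Sym2 (Fin n))) (L : Finset (Fin n)) : Prop :=
  ∃ e ∈ E, pairIn e L

/-- ER(n,q) probability weight of a given edge set `E`. -/
def erWeight (n : ℕ) (q : ℝ) (E : Finset (Sym2 (Fin n))) : ℝ :=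
  q ^ E.card * (1 - q) ^ ((allPairs n).card - E.card)

/-- Probability of an event under the Erdős–Rényi random graph ER(n,q). -/
def erProb (n : ℕ) (q : ℝ) (A : Finset (Sym2 (Fin n)) → Prop) : ℝ :=
  ∑ E ∈ (allPairs n).powerset, if A E then erWeight n q E else 0

/-- Bernoulli(p) probability weight of a single test `L ⊆ {1,…,n}`. -/
def testWeight (n : ℕ) (p : ℝ) (L : Finset (Fin n)) : ℝ :=
  p ^ L.card * (1 - p) ^ (n - L.card)

/-- Probability of an event for a single Bernoulli(p) test. -/
def bernProb (n : ℕ) (p : ℝ) (A : Finset (Fin n) → Prop) : ℝ :=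
  ∑ L : Finset (Fin n), if A L then testWeight n p L else 0

/-- Probability weight of `t` i.i.d. Bernoulli(p) tests. -/
def testsWeight (n t : ℕ) (p : ℝ) (Ls : Fin t → Finset (Fin n)) : ℝ :=
  ∏ i, testWeight n p (Ls i)

/-- Probability of an event for `t` i.i.d. Bernoulli(p) tests. -/
def bernTestsProb (n t : ℕ) (p : ℝ) (A : (Fin t → Finset (Fin n)) → Prop) : ℝ :=
  ∑ Ls : Fin t → Finset (Fin n), if A Ls then testsWeight n t p Ls else 0

/-- Joint probability over an ER(n,q) graph and `t` i.i.d. Bernoulli(p) tests. -/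
def erTestsProb (n t : ℕ) (q p : ℝ)
    (A : Finset (Sym2 (Fin n)) → (Fin t → Finset (Fin n)) → Prop) : ℝ :=
  ∑ E ∈ (allPairs n).powerset, ∑ Ls : Fin t → Finset (Fin n),
    if A E Ls then erWeight n q E * testsWeight n t p Ls else 0

/-- Degree of node `v` in the edge set `E`. -/
def degOf {n : ℕ} (E : Finset (Sym2 (Fin n))) (v : Fin n) : ℕ :=
  (E.filter fun e => v ∈ e).card

/-- Maximum degree of the edge set `E`. -/
def maxDeg {n : ℕ} (E : Finset (Sym2 (Fin n))) : ℕ :=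
  Finset.univ.sup (degOf E)

/-- Average number of edges of ER(n, q n): `k̄ = q·C(n,2)`. -/
def kbar (q : ℕ → ℝ) (n : ℕ) : ℝ := q n * (n.choose 2 : ℝ)

/-- Two pairs are vertex-disjoint. -/
def sym2Disjoint {n : ℕ} (e e' : Sym2 (Fin n)) : Prop := ∀ v, v ∈ e → v ∉ e'

section MyAux

variable {n : ℕ}

/-- vertex set of a pair -/
def vset {n : ℕ} (e : Sym2 (Fin n)) : Finset (Fin n) :=
  Finset.univ.filter (· ∈ e)

lemma pairIn_iff (e : Sym2 (Fin n)) (L : Finset (Fin n)) :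
    pairIn e L ↔ vset e ⊆ L := by
  simp [pairIn, vset, Finset.subset_iff]

lemma vset_mk (a b : Fin n) : vset s(a, b) = {a, b} := by
  ext x; simp [vset, Sym2.mem_iff]

lemma my_sum_binom {α : Type*} [DecidableEq α] (U : Finset α) (p : ℝ) :
    ∑ T ∈ U.powerset, p ^ T.card * (1 - p) ^ (U.card - T.card) = 1 := by
  have h := Finset.prod_add (fun _ : α => p) (fun _ : α => 1 - p) U
  simp only [Finset.prod_const, add_sub_cancel, one_pow] at h
  calc ∑ T ∈ U.powerset, p ^ T.card * (1 - p) ^ (U.card - T.card)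
      = ∑ T ∈ U.powerset, p ^ T.card * (1 - p) ^ (U \ T).card := by
        refine Finset.sum_congr rfl fun T hT => ?_
        rw [Finset.card_sdiff_of_subset (Finset.mem_powerset.mp hT)]
    _ = 1 := h.symm

lemma sum_subset_weight (n : ℕ) (p : ℝ) (S : Finset (Fin n)) :
    ∑ L : Finset (Fin n), (if S ⊆ L then testWeight n p L else 0) = p ^ S.card := by
  classical
  rw [← Finset.sum_filter]
  have hbij : ∑ L ∈ Finset.univ.filter (fun L => S ⊆ L), testWeight n p L
      = ∑ T ∈ Sᶜ.powerset, testWeight n p (S ∪ T) := by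
    refine Finset.sum_nbij' (fun L => L \ S) (fun T => S ∪ T) ?_ ?_ ?_ ?_ ?_
    · intro L hL
      simp only [Finset.mem_powerset]
      intro x hx
      simp only [Finset.mem_sdiff] at hx
      simp [hx.2]
    · intro T hT
      simp only [Finset.mem_filter, Finset.mem_univ, true_and]
      exact Finset.subset_union_left
    · intro L hL
      have hSL : S ⊆ L := by simpa using hL
      exact Finset.union_sdiff_of_subset hSL
    · intro T hT
      simp only [Finset.mem_powerset] at hT
      apply Finset.union_sdiff_cancel_left
      rw [Finset.disjoint_left]
      intro x hxS hxT
      have hxc := hT hxT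
      simp only [Finset.mem_compl] at hxc
      exact hxc hxS
    · intro L hL
      have hSL : S ⊆ L := by simpa using hL
      rw [Finset.union_sdiff_of_subset hSL]
  rw [hbij]
  have hcompl : Sᶜ.card = n - S.card := by
    rw [Finset.card_compl, Fintype.card_fin]
  have hterm : ∀ T ∈ Sᶜ.powerset, testWeight n p (S ∪ T)
      = p ^ S.card * (p ^ T.card * (1 - p) ^ (Sᶜ.card - T.card)) := by
    intro T hT
    have hdisj : Disjoint S T := by
      rw [Finset.mem_powerset] at hT
      refine Finset.disjoint_left.mpr fun x hx hxT => ?_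
      have hxc := hT hxT
      simp only [Finset.mem_compl] at hxc
      exact hxc hx
    have hcard : (S ∪ T).card = S.card + T.card := Finset.card_union_of_disjoint hdisj
    rw [testWeight, hcard, hcompl, pow_add, Nat.sub_sub]
    ring
  rw [Finset.sum_congr rfl hterm, ← Finset.mul_sum, my_sum_binom, mul_one]

lemma sum_two_subset (n : ℕ) (p : ℝ) (S1 S2 : Finset (Fin n)) :
    ∑ L : Finset (Fin n), (if S1 ⊆ L ∨ S2 ⊆ L then testWeight n p L else 0)
      = p ^ S1.card + p ^ S2.card - p ^ (S1 ∪ S2).card := by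
  have key : ∀ L : Finset (Fin n),
      (if S1 ⊆ L ∨ S2 ⊆ L then testWeight n p L else 0)
        = ((if S1 ⊆ L then testWeight n p L else 0)
            + (if S2 ⊆ L then testWeight n p L else 0))
          - (if S1 ∪ S2 ⊆ L then testWeight n p L else 0) := by
    intro L
    by_cases h1 : S1 ⊆ L <;> by_cases h2 : S2 ⊆ L <;>
      simp [h1, h2, Finset.union_subset_iff]
  simp_rw [key]
  rw [Finset.sum_sub_distrib, Finset.sum_add_distrib,
    sum_subset_weight, sum_subset_weight, sum_subset_weight]

lemma bernProb_pair (n : ℕ) (p : ℝ) (e₁ e₂ : Sym2 (Fin n)) :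
    bernProb n p (covers {e₁, e₂})
      = p ^ (vset e₁).card + p ^ (vset e₂).card - p ^ (vset e₁ ∪ vset e₂).card := by
  unfold bernProb
  have h : ∀ L : Finset (Fin n), covers {e₁, e₂} L ↔ (vset e₁ ⊆ L ∨ vset e₂ ⊆ L) := by
    intro L; simp [covers, pairIn_iff]
  simp_rw [h]
  exact sum_two_subset n p _ _

lemma vset_card_of_not_isDiag (e : Sym2 (Fin n)) (h : ¬ e.IsDiag) : (vset e).card = 2 := by
  induction e using Sym2.inductionOn with
  | hf a b =>
    rw [Sym2.mk_isDiag_iff] at h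
    rw [vset_mk, Finset.card_insert_of_notMem (by simp [h]), Finset.card_singleton]

lemma sqrt2_facts :
    ((Real.sqrt 2)⁻¹ : ℝ) ^ 2 = 1 / 2 ∧ ((Real.sqrt 2)⁻¹ : ℝ) ^ 3 = Real.sqrt 2 / 4 ∧
      ((Real.sqrt 2)⁻¹ : ℝ) ^ 4 = 1 / 4 ∧ 0 ≤ ((Real.sqrt 2)⁻¹ : ℝ) ∧
      ((Real.sqrt 2)⁻¹ : ℝ) ≤ 1 := by
  have hs : Real.sqrt 2 * Real.sqrt 2 = 2 := Real.mul_self_sqrt (by norm_num)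
  have h0 : (0:ℝ) < Real.sqrt 2 := Real.sqrt_pos.mpr (by norm_num)
  have h1 : (1:ℝ) ≤ Real.sqrt 2 := by nlinarith
  refine ⟨?_, ?_, ?_, ?_, ?_⟩
  · rw [pow_two, ← mul_inv, hs]; norm_num
  · have : ((Real.sqrt 2)⁻¹ : ℝ) ^ 3 = ((Real.sqrt 2)⁻¹ * (Real.sqrt 2)⁻¹) * (Real.sqrt 2)⁻¹ := by ring
    rw [this, ← mul_inv, hs]
    rw [eq_div_iff (by norm_num : (4:ℝ) ≠ 0)]
    field_simp
    nlinarith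
  · have : ((Real.sqrt 2)⁻¹ : ℝ) ^ 4 = ((Real.sqrt 2)⁻¹ * (Real.sqrt 2)⁻¹) ^ 2 := by ring
    rw [this, ← mul_inv, hs]; norm_num
  · positivity
  · rw [inv_le_one_iff₀]; right; exact h1

lemma testWeight_nonneg (n : ℕ) (p : ℝ) (hp0 : 0 ≤ p) (hp1 : p ≤ 1) (L : Finset (Fin n)) :
    0 ≤ testWeight n p L := by
  have : (0:ℝ) ≤ 1 - p := by linarith
  exact mul_nonneg (pow_nonneg hp0 _) (pow_nonneg this _)

lemma bernProb_mono (n : ℕ) (p : ℝ) (hp0 : 0 ≤ p) (hp1 : p ≤ 1)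
    {A B : Finset (Fin n) → Prop} (h : ∀ L, A L → B L) :
    bernProb n p A ≤ bernProb n p B := by
  refine Finset.sum_le_sum fun L _ => ?_
  by_cases hA : A L
  · simp [hA, h L hA]
  · simp only [hA, if_false]
    split_ifs
    · exact testWeight_nonneg n p hp0 hp1 L
    · exact le_refl 0

lemma bernProb_two_shared (n : ℕ) (e₁ e₂ : Sym2 (Fin n)) (hne : e₁ ≠ e₂)
    (h₁ : ¬ e₁.IsDiag) (h₂ : ¬ e₂.IsDiag) (hsh : ∃ v, v ∈ e₁ ∧ v ∈ e₂) :
    bernProb n (Real.sqrt 2)⁻¹ (covers {e₁, e₂}) = 1 - Real.sqrt 2 / 4 := by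
  obtain ⟨v, hv1, hv2⟩ := hsh
  obtain ⟨a, ha⟩ : ∃ a, s(v, a) = e₁ := ⟨_, Sym2.other_spec hv1⟩
  obtain ⟨b, hb⟩ : ∃ b, s(v, b) = e₂ := ⟨_, Sym2.other_spec hv2⟩
  subst ha; subst hb
  rw [Sym2.mk_isDiag_iff] at h₁ h₂
  have hab : a ≠ b := by
    rintro rfl; exact hne rfl
  rw [bernProb_pair, vset_mk, vset_mk]
  have hc1 : ({v, a} : Finset (Fin n)).card = 2 := by
    rw [Finset.card_insert_of_notMem (by simp [h₁]), Finset.card_singleton]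
  have hc2 : ({v, b} : Finset (Fin n)).card = 2 := by
    rw [Finset.card_insert_of_notMem (by simp [h₂]), Finset.card_singleton]
  have hu : ({v, a} ∪ {v, b} : Finset (Fin n)) = {v, a, b} := by
    ext x; simp
  have hc3 : ({v, a} ∪ {v, b} : Finset (Fin n)).card = 3 := by
    rw [hu, Finset.card_insert_of_notMem (by simp [h₁, h₂]),
      Finset.card_insert_of_notMem (by simp [hab]), Finset.card_singleton]
  obtain ⟨hp2, hp3, hp4, _, _⟩ := sqrt2_facts
  rw [hc1, hc2, hc3, hp2, hp3]
  norm_num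

lemma bernProb_two_disjoint (n : ℕ) (e₁ e₂ : Sym2 (Fin n)) (_hne : e₁ ≠ e₂)
    (h₁ : ¬ e₁.IsDiag) (h₂ : ¬ e₂.IsDiag) (hd : sym2Disjoint e₁ e₂) :
    bernProb n (Real.sqrt 2)⁻¹ (covers {e₁, e₂}) = 3 / 4 := by
  rw [bernProb_pair]
  have hdisj : Disjoint (vset e₁) (vset e₂) := by
    rw [Finset.disjoint_left]
    intro x hx1 hx2
    simp only [vset, Finset.mem_filter] at hx1 hx2
    exact hd x hx1.2 hx2.2
  have hc1 := vset_card_of_not_isDiag e₁ h₁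
  have hc2 := vset_card_of_not_isDiag e₂ h₂
  have hc3 : (vset e₁ ∪ vset e₂).card = 4 := by
    rw [Finset.card_union_of_disjoint hdisj, hc1, hc2]
  obtain ⟨hp2, hp3, hp4, _, _⟩ := sqrt2_facts
  rw [hc1, hc2, hc3, hp2, hp4]
  norm_num

end MyAux


/-- single multiplicity test, node inclusion probability `1/√2`.
(i) no edges ⟹ positive probability `0`; (ii) exactly one edge ⟹ exactly `1/2`;
(iii) at least two edges ⟹ at least `1 − √2/4`; two edges sharing a node give exactly
`1 − √2/4`, while two vertex-disjoint edges give exactly `3/4`. -/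
theorem statement17 (n : ℕ) (E : Finset (Sym2 (Fin n)))
    (hsimple : ∀ e ∈ E, ¬ e.IsDiag) :
    (E = ∅ → bernProb n (Real.sqrt 2)⁻¹ (covers E) = 0) ∧
    (E.card = 1 → bernProb n (Real.sqrt 2)⁻¹ (covers E) = 1 / 2) ∧
    (2 ≤ E.card → 1 - Real.sqrt 2 / 4 ≤ bernProb n (Real.sqrt 2)⁻¹ (covers E)) ∧
    (∀ e₁ e₂ : Sym2 (Fin n), e₁ ≠ e₂ → E = {e₁, e₂} → (∃ v, v ∈ e₁ ∧ v ∈ e₂) →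
      bernProb n (Real.sqrt 2)⁻¹ (covers E) = 1 - Real.sqrt 2 / 4) ∧
    (∀ e₁ e₂ : Sym2 (Fin n), e₁ ≠ e₂ → E = {e₁, e₂} → sym2Disjoint e₁ e₂ →
      bernProb n (Real.sqrt 2)⁻¹ (covers E) = 3 / 4) := by
  obtain ⟨hp2, hp3, hp4, hp0, hp1⟩ := sqrt2_facts
  refine ⟨?_, ?_, ?_, ?_, ?_⟩
  · rintro rfl
    simp [bernProb, covers]
  · intro hcard
    obtain ⟨e, rfl⟩ := Finset.card_eq_one.mp hcard
    have he : ¬ e.IsDiag := hsimple e (Finset.mem_singleton_self e)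
    have hiff : ∀ L : Finset (Fin n), covers {e} L ↔ vset e ⊆ L := by
      intro L; simp [covers, pairIn_iff]
    unfold bernProb
    simp_rw [hiff]
    rw [sum_subset_weight, vset_card_of_not_isDiag e he, hp2]
  · intro hcard
    obtain ⟨e₁, h1, e₂, h2, hne⟩ := Finset.one_lt_card.mp hcard
    have hsub : ∀ L, covers {e₁, e₂} L → covers E L := by
      intro L hL
      obtain ⟨e, he, hp⟩ := hL
      simp only [Finset.mem_insert, Finset.mem_singleton] at he
      rcases he with rfl | rfl
      exacts [⟨e, h1, hp⟩, ⟨e, h2, hp⟩]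
    have hmono := bernProb_mono n _ hp0 hp1 hsub
    refine le_trans ?_ hmono
    by_cases hsh : ∃ v, v ∈ e₁ ∧ v ∈ e₂
    · rw [bernProb_two_shared n e₁ e₂ hne (hsimple _ h1) (hsimple _ h2) hsh]
    · push_neg at hsh
      rw [bernProb_two_disjoint n e₁ e₂ hne (hsimple _ h1) (hsimple _ h2)
        (fun v hv1 hv2 => hsh v hv1 hv2)]
      have h1s : (1:ℝ) ≤ Real.sqrt 2 := by
        nlinarith [Real.mul_self_sqrt (show (0:ℝ) ≤ 2 by norm_num), Real.sqrt_nonneg 2]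
      linarith
  · intro e₁ e₂ hne hE hsh
    subst hE
    exact bernProb_two_shared n e₁ e₂ hne (hsimple _ (by simp)) (hsimple _ (by simp)) hsh
  · intro e₁ e₂ hne hE hd
    subst hE
    exact bernProb_two_disjoint n e₁ e₂ hne (hsimple _ (by simp)) (hsimple _ (by simp)) hd

end
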